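/- arXiv:2107.00640 — 3 statements merged into one kernel-verified Lean document; each statement's English description precedes it below -/
import Mathlib

section
/- If θ₁ and θ₂ have symmetric, continuous, strictly positive joint density on [0,1]² and Corr(θ₁,θ₂) ≠ 0, then there exists t ∈ (0,1) such that E[θ₁ | θ₂ = t]/E[θ₁] ≠ (1 − E[θ₁ | θ₂ = t])/(1 − E[θ₁]). -/
/-!
Since `E[θ₁] ∉ {0, 1}`, the ratio equality for some `t` forces `E[θ₁ | θ₂ = t] = E[θ₁]`; if it
held for every `t ∈ (0,1)`, the conditional mean would be constant. Integrating `t · E[θ₁ | θ₂ = t]` against the marginal of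
`θ₂` (which is that of `θ₁`, by symmetry) then gives `E[θ₁θ₂] = E[θ₁]²`, i.e. zero covariance.
-/

open Set intervalIntegral

theorem div_eq_one_sub_div_one_sub_iff {K : Type*} [Field K] {a e : K} (he : e ≠ 0)
    (he₁ : 1 - e ≠ 0) : a / e = (1 - a) / (1 - e) ↔ a = e := by
  rw [div_eq_div_iff he he₁]
  constructor <;> intro h <;> linear_combination h

theorem integral_integral_mul_eq_of_condMean_eq (f : ℝ → ℝ → ℝ) (e : ℝ) {a b : ℝ} (hab : a ≤ b)
    (h : ∀ t ∈ Ioo a b, ∫ s in a..b, s * f s t = e * ∫ s in a..b, f s t) :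
    ∫ t in a..b, ∫ s in a..b, s * t * f s t = e * ∫ t in a..b, t * ∫ s in a..b, f s t :=
  calc ∫ t in a..b, ∫ s in a..b, s * t * f s t
      = ∫ t in a..b, t * ∫ s in a..b, s * f s t := by
        simp only [← integral_const_mul]
        exact integral_congr fun t _ => integral_congr fun s _ => by ring
    _ = ∫ t in a..b, e * (t * ∫ s in a..b, f s t) :=
        integral_congr_Ioo_of_le hab fun t ht => by rw [h t ht, mul_left_comm]
    _ = e * ∫ t in a..b, t * ∫ s in a..b, f s t := integral_const_mul _ _

theorem stmt4_general (f : ℝ → ℝ → ℝ)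
    (hsymm : ∀ x y, f x y = f y x)
    (E : ℝ) (hE : E = ∫ x in (0:ℝ)..1, x * ∫ y in (0:ℝ)..1, f x y)
    (hE01 : E ∈ Ioo (0:ℝ) 1)
    (cond : ℝ → ℝ)
    (hcond : ∀ t, cond t = (∫ s in (0:ℝ)..1, s * f s t) / (∫ s in (0:ℝ)..1, f s t))
    (hcov : (∫ t in (0:ℝ)..1, ∫ s in (0:ℝ)..1, s * t * f s t) ≠ E ^ 2) :
    ∃ t ∈ Ioo (0:ℝ) 1, cond t / E ≠ (1 - cond t) / (1 - E) := by
  by_contra! hno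
  obtain ⟨hE₀, hE₁⟩ := hE01
  -- `E ≠ 0` also rules out the junk case `∫ s in 0..1, f s t = 0` of the division in `cond t`.
  have hcondMean : ∀ t ∈ Ioo (0:ℝ) 1, ∫ s in (0:ℝ)..1, s * f s t = E * ∫ s in (0:ℝ)..1, f s t :=
    fun t ht => by
      have hmean : cond t = E :=
        (div_eq_one_sub_div_one_sub_iff hE₀.ne' (sub_ne_zero.2 hE₁.ne')).1 (hno t ht)
      rw [hcond t] at hmean
      exact eq_mul_of_mul_inv_eq₀ hE₀.ne' hmean
  have hmarginal : ∫ t in (0:ℝ)..1, t * ∫ s in (0:ℝ)..1, f s t = E := by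
    rw [hE]
    exact integral_congr fun x _ => by simp only [integral_congr fun y _ => hsymm y x]
  apply hcov
  rw [integral_integral_mul_eq_of_condMean_eq f E zero_le_one hcondMean, hmarginal, sq]

/-- If θ₁, θ₂ (symmetric, continuous, positive joint density on [0,1]²) are
correlated (Cov ≠ 0, i.e. E[θ₁θ₂] ≠ E[θ₁]²), then there is t ∈ (0,1) with
E[θ₁|θ₂=t]/E[θ₁] ≠ (1 − E[θ₁|θ₂=t])/(1 − E[θ₁]). -/
theorem stmt4 (f : ℝ → ℝ → ℝ)
    (hsymm : ∀ x y, f x y = f y x)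
    (hcont : ContinuousOn (fun p : ℝ × ℝ => f p.1 p.2) (Icc 0 1 ×ˢ Icc 0 1))
    (hpos : ∀ x ∈ Icc (0:ℝ) 1, ∀ y ∈ Icc (0:ℝ) 1, 0 < f x y)
    (hdens : (∫ x in (0:ℝ)..1, ∫ y in (0:ℝ)..1, f x y) = 1)
    (E : ℝ) (hE : E = ∫ x in (0:ℝ)..1, x * ∫ y in (0:ℝ)..1, f x y)
    (hE01 : E ∈ Ioo (0:ℝ) 1)
    (cond : ℝ → ℝ)
    (hcond : ∀ t, cond t = (∫ s in (0:ℝ)..1, s * f s t) / (∫ s in (0:ℝ)..1, f s t))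
    (hcov : (∫ t in (0:ℝ)..1, ∫ s in (0:ℝ)..1, s * t * f s t) ≠ E ^ 2) :
    ∃ t ∈ Ioo (0:ℝ) 1, cond t / E ≠ (1 - cond t) / (1 - E) :=
  stmt4_general f hsymm E hE hE01 cond hcond hcov
end

section
/- Let g: [0,1] → (0,∞) be continuous and define b(θ) = ∫₀^θ x·exp(−∫ₓ^θ g(y)dy)·g(x) dx. Then b(0)=0, b is continuously differentiable on (0,1], b'(θ) = (θ − b(θ))·g(θ), and 0 ≤ b(θ) < θ for all θ ∈ (0,1]. -/
/-!
Write `G(t) = ∫₀ᵗ g`. Since `∫ₓ^θ g = G θ - G x`, the bid is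
`b θ = e^{-G θ} ∫₀^θ x (e^{G})'(x) dx`, and integrating by parts gives
`θ - b θ = e^{-G θ} ∫₀^θ e^{G x} dx`. This integral is positive, so `b θ < θ`, and
differentiating `b θ = θ - e^{-G θ} ∫₀^θ e^{G}` gives `b' = 1 - (1 - g (θ - b)) = (θ - b) g`.
-/

open Set intervalIntegral Real

noncomputable def equilibriumBid (g : ℝ → ℝ) (θ : ℝ) : ℝ :=
  ∫ x in (0:ℝ)..θ, x * exp (-∫ y in x..θ, g y) * g x

namespace equilibriumBid

variable {g : ℝ → ℝ}

@[simp]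
lemma zero : equilibriumBid g 0 = 0 := by
  simp [equilibriumBid]

lemma nonneg {θ : ℝ} (hθ : 0 ≤ θ) (hg : ∀ y ∈ Icc 0 θ, 0 ≤ g y) : 0 ≤ equilibriumBid g θ := by
  refine integral_nonneg hθ fun x hx => ?_
  have hgx := hg x hx
  have hx0 := hx.1
  positivity

lemma eq_exp_neg_mul (hg : Continuous g) (θ : ℝ) :
    equilibriumBid g θ =
      exp (-∫ y in (0:ℝ)..θ, g y) * ∫ x in (0:ℝ)..θ, x * (exp (∫ y in (0:ℝ)..x, g y) * g x) := by
  rw [equilibriumBid, ← integral_const_mul]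
  refine integral_congr fun x _ => ?_
  rw [← integral_interval_sub_left (hg.intervalIntegrable 0 θ) (hg.intervalIntegrable 0 x)]
  simp only [neg_sub, exp_sub, exp_neg]
  field_simp

lemma sub_eq_exp_neg_mul_integral (hg : Continuous g) (θ : ℝ) :
    θ - equilibriumBid g θ =
      exp (-∫ y in (0:ℝ)..θ, g y) * ∫ x in (0:ℝ)..θ, exp (∫ y in (0:ℝ)..x, g y) := by
  rw [eq_exp_neg_mul hg]
  set G : ℝ → ℝ := fun t => ∫ y in (0:ℝ)..t, g y
  have hG : ∀ x, HasDerivAt G (g x) x := fun x => (hg.integral_hasStrictDerivAt 0 x).hasDerivAt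
  have hGc : Continuous G := continuous_primitive hg.intervalIntegrable 0
  have hparts : ∫ x in (0:ℝ)..θ, x * (exp (G x) * g x) =
      θ * exp (G θ) - ∫ x in (0:ℝ)..θ, exp (G x) := by
    have := integral_mul_deriv_eq_deriv_mul (fun x _ => hasDerivAt_id x)
      (fun x _ => (hG x).exp) intervalIntegrable_const
      (((continuous_exp.comp hGc).mul hg).intervalIntegrable 0 θ)
    simpa using this
  have hexp : exp (-∫ y in (0:ℝ)..θ, g y) * exp (G θ) = 1 := by
    rw [← exp_add, neg_add_cancel, exp_zero]
  rw [hparts]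
  linear_combination -θ * hexp

lemma lt_self (hg : Continuous g) {θ : ℝ} (hθ : 0 < θ) : equilibriumBid g θ < θ := by
  have hint : 0 < ∫ x in (0:ℝ)..θ, exp (∫ y in (0:ℝ)..x, g y) :=
    intervalIntegral_pos_of_pos
      ((continuous_exp.comp (continuous_primitive hg.intervalIntegrable 0)).intervalIntegrable _ _)
      (fun _ => exp_pos _) hθ
  have := sub_eq_exp_neg_mul_integral hg θ
  have := mul_pos (exp_pos (-∫ y in (0:ℝ)..θ, g y)) hint
  linarith

lemma hasDerivAt (hg : Continuous g) (θ : ℝ) :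
    HasDerivAt (equilibriumBid g) ((θ - equilibriumBid g θ) * g θ) θ := by
  have hG := (hg.integral_hasStrictDerivAt 0 θ).hasDerivAt
  have hexpG : Continuous fun x => exp (∫ y in (0:ℝ)..x, g y) :=
    continuous_exp.comp (continuous_primitive hg.intervalIntegrable 0)
  have hE := (hexpG.integral_hasStrictDerivAt 0 θ).hasDerivAt
  have hbid : equilibriumBid g = fun t => t - exp (-∫ y in (0:ℝ)..t, g y) *
      ∫ x in (0:ℝ)..t, exp (∫ y in (0:ℝ)..x, g y) :=
    funext fun t => by linarith [sub_eq_exp_neg_mul_integral hg t]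
  have hexp : exp (-∫ y in (0:ℝ)..θ, g y) * exp (∫ y in (0:ℝ)..θ, g y) = 1 := by
    rw [← exp_add, neg_add_cancel, exp_zero]
  rw [sub_eq_exp_neg_mul_integral hg θ, hbid]
  refine ((hasDerivAt_id' θ).sub (hG.neg.exp.mul hE)).congr_deriv ?_
  simp only [Pi.neg_apply]
  linear_combination -hexp

end equilibriumBid

/-- For continuous positive g, the function
b(θ) = ∫₀^θ x·exp(−∫ₓ^θ g)·g(x) dx satisfies b(0)=0,
b'(θ) = (θ−b(θ))·g(θ) and 0 ≤ b(θ) < θ on (0,1]. -/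
theorem stmt6 (g : ℝ → ℝ) (hg : Continuous g)
    (hgpos : ∀ y ∈ Icc (0:ℝ) 1, 0 < g y)
    (b : ℝ → ℝ)
    (hb : ∀ θ, b θ = ∫ x in (0:ℝ)..θ, x * Real.exp (-∫ y in x..θ, g y) * g x) :
    b 0 = 0 ∧
      ∀ θ ∈ Ioc (0:ℝ) 1, HasDerivAt b ((θ - b θ) * g θ) θ ∧ 0 ≤ b θ ∧ b θ < θ := by
  obtain rfl : b = equilibriumBid g := funext hb
  refine ⟨equilibriumBid.zero, fun θ ⟨hθ0, hθ1⟩ => ⟨equilibriumBid.hasDerivAt hg θ,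
    equilibriumBid.nonneg hθ0.le fun y hy => (hgpos y ⟨hy.1, hy.2.trans hθ1⟩).le,
    equilibriumBid.lt_self hg hθ0⟩⟩
end

section
/- For α > 0, the random variables θ₁, θ₂ with joint density f_α(θ₁,θ₂) = ((2+α)/2)(1−|θ₁−θ₂|)^α on [0,1]² are positively correlated: Cov(θ₁,θ₂) > 0. -/
/-!
Splitting the inner integral at `y = x` and substituting `t = 1 - |x - y|` turns every moment of
`f_α` into integrals of `t ^ β`, `t * t ^ β` and `t * (1 - t) ^ β` over `[0, 1]`. This gives
`E θ₁ = E θ₂ = 1/2` and `E[θ₁θ₂] = (α+2)(2α+9) / (6(α+3)(α+4))`, hence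
`Cov(θ₁, θ₂) = α(α+5) / (12(α+3)(α+4))`, which is positive for `α > 0`.
-/

open Set intervalIntegral

section BetaIntegrals

variable {β : ℝ}

lemma integral_rpow_to_one (hβ : -1 < β) (a : ℝ) :
    ∫ t in a..1, t ^ β = (1 - a ^ (β + 1)) / (β + 1) := by
  rw [integral_rpow (Or.inl hβ), Real.one_rpow]

lemma integral_mul_rpow_to_one (hβ : -1 < β) {a : ℝ} (ha : 0 ≤ a) :
    ∫ t in a..1, t * t ^ β = (1 - a ^ (β + 2)) / (β + 2) := by
  have hpow : EqOn (fun t : ℝ => t * t ^ β) (fun t => t ^ (β + 1)) (uIcc a 1) :=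
    fun t ht => by
    have ht0 : 0 ≤ t := (le_inf ha zero_le_one).trans ht.1
    dsimp only
    rw [Real.rpow_add_one' ht0 (by linarith), mul_comm]
  rw [integral_congr hpow, integral_rpow_to_one (by linarith), add_assoc, one_add_one_eq_two]

lemma integral_rpow_zero_one (hβ : -1 < β) : ∫ t in (0:ℝ)..1, t ^ β = 1 / (β + 1) := by
  rw [integral_rpow_to_one hβ, Real.zero_rpow (by linarith), sub_zero]

lemma integral_mul_rpow_zero_one (hβ : -1 < β) : ∫ t in (0:ℝ)..1, t * t ^ β = 1 / (β + 2) := by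
  rw [integral_mul_rpow_to_one hβ le_rfl, Real.zero_rpow (by linarith), sub_zero]

lemma integral_one_sub_rpow_zero_one (hβ : -1 < β) :
    ∫ t in (0:ℝ)..1, (1 - t) ^ β = 1 / (β + 1) := by
  have h := integral_comp_sub_left (fun t : ℝ => t ^ β) 1 (a := 0) (b := 1)
  simp only [sub_zero, sub_self] at h
  rw [h, integral_rpow_zero_one hβ]

lemma integral_mul_one_sub_rpow_zero_one (hβ : -1 < β) :
    ∫ t in (0:ℝ)..1, t * (1 - t) ^ β = 1 / ((β + 1) * (β + 2)) := by
  have h := integral_comp_sub_left (fun t : ℝ => (1 - t) * t ^ β) 1 (a := 0) (b := 1)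
  simp only [sub_zero, sub_self, sub_sub_cancel, sub_mul, one_mul] at h
  have hβ1 : β + 1 ≠ 0 := by linarith
  have hβ2 : β + 2 ≠ 0 := by linarith
  have hint := intervalIntegrable_rpow' hβ (a := 0) (b := 1)
  rw [h, integral_sub hint (hint.continuousOn_mul (continuousOn_id' _)), integral_rpow_zero_one hβ,
    integral_mul_rpow_zero_one hβ]
  field_simp
  ring

end BetaIntegrals

section TentKernel

variable {α x : ℝ}

lemma integral_mul_one_sub_abs_rpow_split (hα : 0 ≤ α) (hx : x ∈ Icc (0:ℝ) 1) {g : ℝ → ℝ}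
    (hg : Continuous g) :
    ∫ y in (0:ℝ)..1, g y * (1 - |x - y|) ^ α
      = (∫ t in (1 - x)..1, g (t - (1 - x)) * t ^ α) + ∫ t in x..1, g (1 + x - t) * t ^ α := by
  obtain ⟨hx0, hx1⟩ := hx
  have hc : Continuous fun y => g y * (1 - |x - y|) ^ α := by
    fun_prop (disch := positivity)
  have below : ∫ y in (0:ℝ)..x, g y * (1 - |x - y|) ^ α
      = ∫ t in (1 - x)..1, g (t - (1 - x)) * t ^ α := by
    have h := integral_comp_add_right (fun t => g (t - (1 - x)) * t ^ α) (1 - x)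
      (a := 0) (b := x)
    rw [zero_add, add_sub_cancel] at h
    rw [← h]
    refine integral_congr fun y hy => ?_
    rw [uIcc_of_le hx0] at hy
    simp only [add_sub_cancel_right]
    rw [abs_of_nonneg (by linarith [hy.2])]
    ring_nf
  have above : ∫ y in x..1, g y * (1 - |x - y|) ^ α = ∫ t in x..1, g (1 + x - t) * t ^ α := by
    have h := integral_comp_sub_left (fun t => g (1 + x - t) * t ^ α) (1 + x)
      (a := x) (b := 1)
    rw [add_sub_cancel_left, add_sub_cancel_right] at h
    rw [← h]
    refine integral_congr fun y hy => ?_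
    rw [uIcc_of_le hx1] at hy
    simp only [sub_sub_cancel]
    rw [abs_of_nonpos (by linarith [hy.1])]
    ring_nf
  rw [← integral_add_adjacent_intervals (b := x) (hc.intervalIntegrable _ _)
    (hc.intervalIntegrable _ _), below, above]

lemma integral_one_sub_abs_rpow (hα : 0 ≤ α) (hx : x ∈ Icc (0:ℝ) 1) :
    ∫ y in (0:ℝ)..1, (1 - |x - y|) ^ α = (2 - x ^ (α + 1) - (1 - x) ^ (α + 1)) / (α + 1) := by
  have h := integral_mul_one_sub_abs_rpow_split hα hx (g := fun _ => 1) continuous_const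
  simp only [one_mul] at h
  rw [h, integral_rpow_to_one (by linarith), integral_rpow_to_one (by linarith)]
  ring

lemma integral_id_mul_one_sub_abs_rpow (hα : 0 ≤ α) (hx : x ∈ Icc (0:ℝ) 1) :
    ∫ y in (0:ℝ)..1, y * (1 - |x - y|) ^ α
      = (x ^ (α + 2) - (1 - x) ^ (α + 2)) / (α + 2)
        + (2 * x - x ^ (α + 1) - x ^ (α + 2) + (1 - x) ^ (α + 2)) / (α + 1) := by
  have hshift : ∀ z : ℝ, 0 ≤ z → z ^ (α + 2) = z ^ (α + 1) * z := fun z hz => by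
    rw [← Real.rpow_add_one' hz (by linarith)]
    ring_nf
  have h := integral_mul_one_sub_abs_rpow_split hα hx continuous_id
  simp only [id, sub_mul] at h
  simp (disch := apply Continuous.intervalIntegrable; fun_prop (disch := positivity)) only
    [integral_sub, integral_const_mul] at h
  rw [h, integral_mul_rpow_to_one (by linarith) (by linarith [hx.2]),
    integral_mul_rpow_to_one (by linarith) hx.1, integral_rpow_to_one (by linarith),
    integral_rpow_to_one (by linarith), hshift x hx.1,
    hshift (1 - x) (by linarith [hx.2])]
  field_simp
  ring

end TentKernel

section Moments

variable {α : ℝ}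

lemma integral_integral_fst_mul_density (hα : 0 ≤ α) :
    ∫ x in (0:ℝ)..1, ∫ y in (0:ℝ)..1, x * ((2 + α) / 2 * (1 - |x - y|) ^ α) = 1 / 2 := by
  have hinner : EqOn (fun x => ∫ y in (0:ℝ)..1, x * ((2 + α) / 2 * (1 - |x - y|) ^ α))
      (fun x => (2 + α) / 2 / (α + 1) * (2 * x - x * x ^ (α + 1) - x * (1 - x) ^ (α + 1)))
      (uIcc 0 1) := fun x hx => by
    rw [uIcc_of_le zero_le_one] at hx
    simp only [← mul_assoc]
    rw [integral_const_mul, integral_one_sub_abs_rpow hα hx]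
    ring
  rw [integral_congr hinner]
  simp (disch := apply Continuous.intervalIntegrable; fun_prop (disch := positivity)) only
    [integral_sub, integral_const_mul]
  rw [integral_const_mul, integral_id, integral_mul_rpow_zero_one (by linarith),
    integral_mul_one_sub_rpow_zero_one (by linarith)]
  field_simp
  ring

lemma integral_integral_snd_mul_density (hα : 0 ≤ α) :
    ∫ x in (0:ℝ)..1, ∫ y in (0:ℝ)..1, y * ((2 + α) / 2 * (1 - |x - y|) ^ α) = 1 / 2 := by
  have hinner : EqOn (fun x => ∫ y in (0:ℝ)..1, y * ((2 + α) / 2 * (1 - |x - y|) ^ α))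
      (fun x => (2 + α) / 2 * ((x ^ (α + 2) - (1 - x) ^ (α + 2)) / (α + 2)
        + (2 * x - x ^ (α + 1) - x ^ (α + 2) + (1 - x) ^ (α + 2)) / (α + 1)))
      (uIcc 0 1) := fun x hx => by
    rw [uIcc_of_le zero_le_one] at hx
    simp only [mul_left_comm _ ((2 + α) / 2)]
    rw [integral_const_mul, integral_id_mul_one_sub_abs_rpow hα hx]
  rw [integral_congr hinner]
  simp (disch := apply Continuous.intervalIntegrable; fun_prop (disch := positivity)) only
    [integral_sub, integral_add, integral_const_mul, integral_div]
  rw [integral_const_mul, integral_id, integral_rpow_zero_one (by linarith),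
    integral_rpow_zero_one (by linarith), integral_one_sub_rpow_zero_one (by linarith)]
  field_simp
  ring

lemma integral_integral_mul_mul_density (hα : 0 ≤ α) :
    ∫ x in (0:ℝ)..1, ∫ y in (0:ℝ)..1, x * y * ((2 + α) / 2 * (1 - |x - y|) ^ α)
      = (α + 2) * (2 * α + 9) / (6 * (α + 3) * (α + 4)) := by
  have hinner : EqOn (fun x => ∫ y in (0:ℝ)..1, x * y * ((2 + α) / 2 * (1 - |x - y|) ^ α))
      (fun x => (2 + α) / 2 * ((x * x ^ (α + 2) - x * (1 - x) ^ (α + 2)) / (α + 2)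
        + (2 * x ^ 2 - x * x ^ (α + 1) - x * x ^ (α + 2) + x * (1 - x) ^ (α + 2)) / (α + 1)))
      (uIcc 0 1) := fun x hx => by
    rw [uIcc_of_le zero_le_one] at hx
    have hrearrange : ∀ y, x * y * ((2 + α) / 2 * (1 - |x - y|) ^ α)
        = (2 + α) / 2 * x * (y * (1 - |x - y|) ^ α) := fun y => by ring
    simp only [hrearrange]
    rw [integral_const_mul, integral_id_mul_one_sub_abs_rpow hα hx]
    ring
  rw [integral_congr hinner]
  simp (disch := apply Continuous.intervalIntegrable; fun_prop (disch := positivity)) only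
    [integral_sub, integral_add, integral_const_mul, integral_div]
  rw [integral_pow, integral_mul_rpow_zero_one (by linarith),
    integral_mul_rpow_zero_one (by linarith), integral_mul_one_sub_rpow_zero_one (by linarith)]
  field_simp
  ring

end Moments

/-- For α > 0, the parametric density f_α induces positive covariance:
Cov(θ₁,θ₂) = E[θ₁θ₂] − E[θ₁]E[θ₂] > 0. -/
theorem stmt17 (α : ℝ) (hα : 0 < α) :
    0 < (∫ x in (0:ℝ)..1, ∫ y in (0:ℝ)..1,
          x * y * (((2 + α) / 2) * (1 - |x - y|) ^ α))
        - (∫ x in (0:ℝ)..1, ∫ y in (0:ℝ)..1,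
            x * (((2 + α) / 2) * (1 - |x - y|) ^ α))
          * (∫ x in (0:ℝ)..1, ∫ y in (0:ℝ)..1,
              y * (((2 + α) / 2) * (1 - |x - y|) ^ α)) := by
  rw [integral_integral_mul_mul_density hα.le, integral_integral_fst_mul_density hα.le,
    integral_integral_snd_mul_density hα.le]
  have hcov : (α + 2) * (2 * α + 9) / (6 * (α + 3) * (α + 4)) - 1 / 2 * (1 / 2)
      = α * (α + 5) / (12 * (α + 3) * (α + 4)) := by
    field_simp
    ring
  rw [hcov]
  positivity
end
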